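/- For every L > 0 there exists ε > 0 such that the following holds: for every h* with 1/L ≤ h* ≤ L, every 2π-periodic C⁴ function h : ℝ → ℝ with h(θ) > 0 for all θ, satisfying (d/dθ)[h(θ)²/2 + h(θ)³·(h'(θ) + h'''(θ))] = 0 for all θ ∈ ℝ, ∫₀^{2π} h(θ) dθ = 2π·h*, and |h(θ) − h*| ≤ ε for all θ, satisfies h(θ) = h* for all θ. -/

import Mathlib

/-! Integrating the equation once, the flux `J = h²/2 + h³(h' + h''')` is constant. Then
`h'(h' + h''') = h'·(J - h²/2)/h³` is the derivative of a function of `h` and integrates to zero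
over a period, and integrating `h'h'''` by parts turns this into `∫ h'² = ∫ h''²`. As `h'` has
mean zero, Parseval rewrites this identity as `∑ (n² - 1)‖ĉₙ‖² = 0` for the Fourier coefficients
`ĉₙ` of `h'`, a sum of nonnegative terms; so only the modes `n = ±1` survive, i.e. `h''' = -h'`.
The flux then reads `h²/2 = J`, so the positive function `h` is constant, equal to its
average `h*`. -/

open Real MeasureTheory Set intervalIntegral
open scoped Interval

section IterateDeriv

variable {𝕜 F : Type*} [NontriviallyNormedField 𝕜] [NormedAddCommGroup F] [NormedSpace 𝕜 F]

theorem Function.Periodic.deriv {f : 𝕜 → F} {c : 𝕜} (hf : Function.Periodic f c) :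
    Function.Periodic (deriv f) c := fun x => by
  rw [← deriv_comp_add_const]
  exact congrArg (_root_.deriv · x) (funext hf)

theorem Function.Periodic.iterate_deriv {f : 𝕜 → F} {c : 𝕜} (hf : Function.Periodic f c) (k : ℕ) :
    Function.Periodic (_root_.deriv^[k] f) c := by
  induction k generalizing f with
  | zero => exact hf
  | succ k ih => exact ih hf.deriv

theorem ContDiff.hasDerivAt_iterate_deriv {f : 𝕜 → F} {n : ℕ} (hf : ContDiff 𝕜 n f) {k : ℕ}
    (hk : k < n) (x : 𝕜) : HasDerivAt (deriv^[k] f) (deriv^[k + 1] f x) x := by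
  have hk' : ContDiff 𝕜 (1 + k : ℕ) f := hf.of_le (by exact_mod_cast (by omega : 1 + k ≤ n))
  rw [Function.iterate_succ_apply']
  exact ((hk'.iterate_deriv' 1 k).differentiable one_ne_zero x).hasDerivAt

end IterateDeriv

theorem ContinuousOn.memLp_two_Ioc {f : ℝ → ℂ} {a b : ℝ} (hf : ContinuousOn f [[a, b]]) :
    MemLp f 2 (volume.restrict (Ioc a b)) := by
  have hIoc : Ioc a b ⊆ [[a, b]] := Ioc_subset_Icc_self.trans Icc_subset_uIcc
  refine (memLp_two_iff_integrable_sq_norm ?_).2 ?_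
  · exact (hf.mono hIoc).aestronglyMeasurable measurableSet_Ioc
  · exact ((hf.norm.pow 2).integrableOn_compact isCompact_uIcc).mono_set hIoc

theorem fourierCoeffOn_add {a b : ℝ} (hab : a < b) {f g : ℝ → ℂ}
    (hf : IntervalIntegrable f volume a b) (hg : IntervalIntegrable g volume a b) (n : ℤ) :
    fourierCoeffOn hab (f + g) n = fourierCoeffOn hab f n + fourierCoeffOn hab g n := by
  have hF : ContinuousOn (fun x : ℝ => fourier (-n) (x : AddCircle (b - a))) [[a, b]] :=
    ((map_continuous _).comp (AddCircle.continuous_mk' _)).continuousOn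
  simp only [fourierCoeffOn_eq_integral, Pi.add_apply, smul_eq_mul, mul_add]
  rw [integral_add (hf.continuousOn_mul hF) (hg.continuousOn_mul hF), smul_add]

theorem fourierCoeffOn_deriv_of_hasDerivAt {a b : ℝ} (hab : a < b) {f f' : ℝ → ℂ}
    (hf : ∀ x ∈ [[a, b]], HasDerivAt f (f' x) x) (hf' : IntervalIntegrable f' volume a b)
    (hfab : f a = f b) (n : ℤ) :
    fourierCoeffOn hab f' n = 2 * π * Complex.I * n / (b - a) * fourierCoeffOn hab f n := by
  rcases eq_or_ne n 0 with rfl | hn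
  · simp [fourierCoeffOn_eq_integral, integral_eq_sub_of_hasDerivAt hf hf', hfab]
  · rw [fourierCoeffOn_of_hasDerivAt hab hn hf hf', hfab, sub_self, mul_zero, zero_sub]
    have : (b - a : ℂ) ≠ 0 := by exact_mod_cast (sub_pos.2 hab).ne'
    field_simp

theorem eqOn_zero_of_integral_eq_zero {f : ℝ → ℝ} {a b : ℝ} (hab : a < b)
    (hf : ContinuousOn f (Icc a b)) (hf0 : ∀ x ∈ Icc a b, 0 ≤ f x) (h : ∫ x in a..b, f x = 0) :
    EqOn f 0 (Icc a b) := by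
  rw [integral_eq_zero_iff_of_le_of_nonneg_ae hab.le
    (ae_restrict_of_forall_mem measurableSet_Ioc fun x hx => hf0 x (Ioc_subset_Icc_self hx))
    (hf.intervalIntegrable_of_Icc hab.le), Measure.restrict_congr_set Ioc_ae_eq_Icc] at h
  exact Measure.eqOn_Icc_of_ae_eq volume hab.ne h hf continuousOn_const

section Wirtinger

variable {u u' u'' : ℝ → ℂ}

theorem fourierCoeffOn_deriv_deriv_add_eq_zero
    (hu : ∀ x ∈ [[0, 2 * π]], HasDerivAt u (u' x) x)
    (hu' : ∀ x ∈ [[0, 2 * π]], HasDerivAt u' (u'' x) x) (hu'' : ContinuousOn u'' [[0, 2 * π]])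
    (hu0 : u 0 = u (2 * π)) (hu'0 : u' 0 = u' (2 * π)) (hmean : ∫ x in 0..2 * π, u x = 0)
    (henergy : ∫ x in 0..2 * π, ‖u' x‖ ^ 2 = ∫ x in 0..2 * π, ‖u x‖ ^ 2) (n : ℤ) :
    fourierCoeffOn two_pi_pos (u'' + u) n = 0 := by
  have hcu : ContinuousOn u [[0, 2 * π]] := fun x hx => (hu x hx).continuousAt.continuousWithinAt
  have hcu' : ContinuousOn u' [[0, 2 * π]] := fun x hx => (hu' x hx).continuousAt.continuousWithinAt
  set c := fourierCoeffOn two_pi_pos u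
  have hscale : ∀ n : ℤ, 2 * π * Complex.I * n / ((2 * π : ℝ) - (0 : ℝ) : ℂ) = Complex.I * n :=
    fun n => by push_cast; field_simp; ring
  have hc' : ∀ n : ℤ, fourierCoeffOn two_pi_pos u' n = Complex.I * n * c n := fun n => by
    rw [fourierCoeffOn_deriv_of_hasDerivAt two_pi_pos hu hcu'.intervalIntegrable hu0, hscale]
  have hc'' : ∀ n : ℤ, fourierCoeffOn two_pi_pos u'' n = -(n ^ 2 * c n) := fun n => by
    rw [fourierCoeffOn_deriv_of_hasDerivAt two_pi_pos hu' hu''.intervalIntegrable hu'0, hscale, hc']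
    linear_combination (n ^ 2 * c n) * Complex.I_sq
  have hc0 : c 0 = 0 := by simp [c, fourierCoeffOn_eq_integral, hmean]
  have hsum : HasSum (fun n : ℤ => (n : ℝ) ^ 2 * ‖c n‖ ^ 2 - ‖c n‖ ^ 2) 0 := by
    have := (hasSum_sq_fourierCoeffOn two_pi_pos (hcu'.memLp_two_Ioc)).sub
      (hasSum_sq_fourierCoeffOn two_pi_pos hcu.memLp_two_Ioc)
    simpa only [henergy, sub_self, hc', norm_mul, Complex.norm_I, one_mul, Complex.norm_intCast,
      mul_pow, sq_abs] using this
  have hnonneg : ∀ n : ℤ, 0 ≤ (n : ℝ) ^ 2 * ‖c n‖ ^ 2 - ‖c n‖ ^ 2 := fun n => by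
    rcases eq_or_ne n 0 with rfl | hn
    · simp [hc0]
    · have : (1 : ℝ) ≤ (n : ℝ) ^ 2 := mod_cast (one_le_sq_iff_one_le_abs _).2 (Int.one_le_abs hn)
      nlinarith [sq_nonneg ‖c n‖]
  have hterm := congrFun ((hasSum_zero_iff_of_nonneg hnonneg).1 hsum) n
  rw [fourierCoeffOn_add two_pi_pos hu''.intervalIntegrable hcu.intervalIntegrable, hc'']
  show -(n ^ 2 * c n) + c n = 0
  rcases mul_eq_zero.1 (show ((n : ℝ) ^ 2 - 1) * ‖c n‖ ^ 2 = 0 by simpa [sub_mul] using hterm)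
    with hn | hcn
  · have hn : (n : ℂ) ^ 2 = 1 := by exact_mod_cast sub_eq_zero.1 hn
    linear_combination -(c n) * hn
  · simp [norm_eq_zero.1 (pow_eq_zero_iff two_ne_zero |>.1 hcn)]

theorem eqOn_neg_of_integral_norm_sq_deriv_eq
    (hu : ∀ x ∈ [[0, 2 * π]], HasDerivAt u (u' x) x)
    (hu' : ∀ x ∈ [[0, 2 * π]], HasDerivAt u' (u'' x) x) (hu'' : ContinuousOn u'' [[0, 2 * π]])
    (hu0 : u 0 = u (2 * π)) (hu'0 : u' 0 = u' (2 * π)) (hmean : ∫ x in 0..2 * π, u x = 0)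
    (henergy : ∫ x in 0..2 * π, ‖u' x‖ ^ 2 = ∫ x in 0..2 * π, ‖u x‖ ^ 2) :
    EqOn u'' (-u) [[0, 2 * π]] := by
  have hw : ContinuousOn (u'' + u) [[0, 2 * π]] :=
    hu''.add fun x hx => (hu x hx).continuousAt.continuousWithinAt
  have hsum := hasSum_sq_fourierCoeffOn two_pi_pos hw.memLp_two_Ioc
  simp only [fourierCoeffOn_deriv_deriv_add_eq_zero hu hu' hu'' hu0 hu'0 hmean henergy,
    norm_zero, ne_eq, OfNat.ofNat_ne_zero, not_false_eq_true, zero_pow] at hsum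
  have hint : ∫ x in 0..2 * π, ‖(u'' + u) x‖ ^ 2 = 0 := by
    simpa [pi_ne_zero] using hsum.unique hasSum_zero
  intro x hx
  rw [uIcc_of_le two_pi_pos.le] at hx hw
  have := eqOn_zero_of_integral_eq_zero two_pi_pos (hw.norm.pow 2) (fun _ _ => sq_nonneg _) hint hx
  simpa [add_eq_zero_iff_eq_neg] using this

end Wirtinger

theorem eqOn_neg_of_integral_sq_deriv_eq {u u' u'' : ℝ → ℝ}
    (hu : ∀ x ∈ [[0, 2 * π]], HasDerivAt u (u' x) x)
    (hu' : ∀ x ∈ [[0, 2 * π]], HasDerivAt u' (u'' x) x) (hu'' : ContinuousOn u'' [[0, 2 * π]])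
    (hu0 : u 0 = u (2 * π)) (hu'0 : u' 0 = u' (2 * π)) (hmean : ∫ x in 0..2 * π, u x = 0)
    (henergy : ∫ x in 0..2 * π, u' x ^ 2 = ∫ x in 0..2 * π, u x ^ 2) :
    EqOn u'' (-u) [[0, 2 * π]] := by
  have := eqOn_neg_of_integral_norm_sq_deriv_eq (u := fun x => (u x : ℂ))
    (fun x hx => (hu x hx).ofReal_comp) (fun x hx => (hu' x hx).ofReal_comp)
    (Complex.continuous_ofReal.comp_continuousOn hu'') (by rw [hu0]) (by rw [hu'0])
    (by rw [integral_ofReal, hmean, Complex.ofReal_zero]) (by simpa using henergy)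
  exact fun x hx => Complex.ofReal_injective (by simpa using this hx)

theorem integral_mul_deriv_deriv_eq_neg {u u' u'' : ℝ → ℝ} {a b : ℝ}
    (hu : ∀ x ∈ [[a, b]], HasDerivAt u (u' x) x) (hu' : ∀ x ∈ [[a, b]], HasDerivAt u' (u'' x) x)
    (hc' : ContinuousOn u' [[a, b]]) (hc'' : ContinuousOn u'' [[a, b]]) (hab : u a = u b)
    (hab' : u' a = u' b) :
    ∫ x in a..b, u x * u'' x = -∫ x in a..b, u' x ^ 2 := by
  rw [integral_mul_deriv_eq_deriv_mul hu hu' hc'.intervalIntegrable hc''.intervalIntegrable,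
    hab, hab', sub_self, zero_sub]
  simp only [sq]

section Flux

variable {h h' h'' h''' : ℝ → ℝ} {a b : ℝ}

theorem integral_deriv_mul_add_eq_zero_of_flux_eq (J : ℝ) (hpos : ∀ x ∈ [[a, b]], 0 < h x)
    (hh : ∀ x ∈ [[a, b]], HasDerivAt h (h' x) x) (hh' : ContinuousOn h' [[a, b]])
    (hab : h a = h b) (hJ : ∀ x ∈ [[a, b]], h x ^ 2 / 2 + h x ^ 3 * (h' x + h''' x) = J) :
    ∫ x in a..b, h' x * (h' x + h''' x) = 0 := by
  have hg : ContinuousOn (fun y => (J - y ^ 2 / 2) / y ^ 3) (h '' [[a, b]]) := by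
    refine ContinuousOn.div (by fun_prop) (by fun_prop) ?_
    rintro _ ⟨x, hx, rfl⟩
    exact (pow_pos (hpos x hx) 3).ne'
  calc ∫ x in a..b, h' x * (h' x + h''' x)
      = ∫ x in a..b, ((fun y => (J - y ^ 2 / 2) / y ^ 3) ∘ h) x * h' x := by
        refine integral_congr fun x hx => ?_
        have := (hpos x hx).ne'
        simp only [Function.comp_apply, ← hJ x hx]
        field_simp
        ring
    _ = 0 := by rw [integral_comp_mul_deriv' hh hh' hg, hab, integral_same]

theorem integral_deriv_sq_eq_of_flux_eq (J : ℝ) (hpos : ∀ x ∈ [[a, b]], 0 < h x)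
    (hh : ∀ x ∈ [[a, b]], HasDerivAt h (h' x) x) (hh' : ∀ x ∈ [[a, b]], HasDerivAt h' (h'' x) x)
    (hh'' : ∀ x ∈ [[a, b]], HasDerivAt h'' (h''' x) x) (hc''' : ContinuousOn h''' [[a, b]])
    (hab : h a = h b) (hab' : h' a = h' b) (hab'' : h'' a = h'' b)
    (hJ : ∀ x ∈ [[a, b]], h x ^ 2 / 2 + h x ^ 3 * (h' x + h''' x) = J) :
    ∫ x in a..b, h' x ^ 2 = ∫ x in a..b, h'' x ^ 2 := by
  have hc' : ContinuousOn h' [[a, b]] := fun x hx => (hh' x hx).continuousAt.continuousWithinAt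
  have hc'' : ContinuousOn h'' [[a, b]] := fun x hx => (hh'' x hx).continuousAt.continuousWithinAt
  have hsplit : ∫ x in a..b, h' x * (h' x + h''' x)
      = (∫ x in a..b, h' x ^ 2) + ∫ x in a..b, h' x * h''' x := by
    simp only [mul_add, sq]
    exact integral_add (hc'.mul hc').intervalIntegrable (hc'.mul hc''').intervalIntegrable
  linarith [integral_deriv_mul_add_eq_zero_of_flux_eq J hpos hh hc' hab hJ,
    integral_mul_deriv_deriv_eq_neg hh' hh'' hc'' hc''' hab' hab'']

end Flux

theorem eq_of_periodic_of_flux_eq {h : ℝ → ℝ} (hper : Function.Periodic h (2 * π))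
    (hreg : ContDiff ℝ 4 h) (hpos : ∀ x, 0 < h x) {J : ℝ}
    (hJ : ∀ x, h x ^ 2 / 2 + h x ^ 3 * (deriv h x + deriv^[3] h x) = J) (θ : ℝ) :
    h θ = h 0 := by
  have hd : ∀ k < 4, ∀ x, HasDerivAt (deriv^[k] h) (deriv^[k + 1] h x) x :=
    fun k hk => hreg.hasDerivAt_iterate_deriv hk
  have hc : ∀ k < 4, Continuous (deriv^[k] h) :=
    fun k hk => continuous_iff_continuousAt.2 fun x => (hd k hk x).continuousAt
  have hc3 := (hc 3 (by norm_num)).continuousOn (s := [[0, 2 * π]])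
  have hend : ∀ k, deriv^[k] h 0 = deriv^[k] h (2 * π) := fun k => (hper.iterate_deriv k).eq.symm
  have henergy := integral_deriv_sq_eq_of_flux_eq J (fun x _ => hpos x)
    (fun x _ => hd 0 (by norm_num) x) (fun x _ => hd 1 (by norm_num) x)
    (fun x _ => hd 2 (by norm_num) x) hc3 (hend 0) (hend 1) (hend 2) (fun x _ => hJ x)
  have hmean : ∫ x in 0..2 * π, deriv^[1] h x = 0 := by
    rw [integral_eq_sub_of_hasDerivAt (fun x _ => hd 0 (by norm_num) x)
      ((hc 1 (by norm_num)).intervalIntegrable _ _), hend 0, sub_self]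
  have hode := eqOn_neg_of_integral_sq_deriv_eq (fun x _ => hd 1 (by norm_num) x)
    (fun x _ => hd 2 (by norm_num) x) hc3 (hend 1) (hend 2) hmean henergy.symm
  have hIcc : ∀ x ∈ Icc 0 (2 * π), h x = h 0 := fun x hx => by
    have hJx := hJ x
    have hJ0 := hJ 0
    rw [hode (by rwa [uIcc_of_le two_pi_pos.le])] at hJx
    rw [hode left_mem_uIcc] at hJ0
    refine (sq_eq_sq₀ (hpos x).le (hpos 0).le).1 ?_
    simp only [Function.iterate_one, Pi.neg_apply, add_neg_cancel, mul_zero, add_zero] at hJx hJ0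
    linarith
  obtain ⟨y, hy, hθy⟩ := hper.exists_mem_Ico₀ two_pi_pos θ
  rw [hθy, hIcc y (Ico_subset_Icc_self hy)]

theorem stmt_8 (L : ℝ) :
    ∃ ε : ℝ, 0 < ε ∧
      ∀ hstar : ℝ, 1 / L ≤ hstar → hstar ≤ L →
        ∀ h : ℝ → ℝ, Function.Periodic h (2 * π) → ContDiff ℝ 4 h →
          (∀ θ, 0 < h θ) →
          (∀ θ : ℝ, deriv (fun φ => (h φ) ^ 2 / 2
              + (h φ) ^ 3 * (deriv h φ + iteratedDeriv 3 h φ)) θ = 0) →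
          (∫ θ in (0:ℝ)..(2 * π), h θ) = 2 * π * hstar →
          (∀ θ : ℝ, |h θ - hstar| ≤ ε) →
          ∀ θ : ℝ, h θ = hstar := by
  refine ⟨1, one_pos, fun hstar _ _ h hper hreg hpos hflux havg _ => ?_⟩
  obtain ⟨J, hJ⟩ : ∃ J, ∀ x, h x ^ 2 / 2 + h x ^ 3 * (deriv h x + deriv^[3] h x) = J := by
    have hD : ∀ k < 4, Differentiable ℝ (deriv^[k] h) :=
      fun k hk x => (hreg.hasDerivAt_iterate_deriv hk x).differentiableAt
    refine ⟨_, fun x => is_const_of_deriv_eq_zero ?_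
      (by simpa only [iteratedDeriv_eq_iterate] using hflux) x 0⟩
    exact ((hD 0 (by norm_num)).pow 2).div_const 2 |>.add
      (((hD 0 (by norm_num)).pow 3).mul ((hD 1 (by norm_num)).add (hD 3 (by norm_num))))
  have hconst := eq_of_periodic_of_flux_eq hper hreg hpos hJ
  have h0 : h 0 = hstar := by
    rw [integral_congr fun x _ => hconst x, intervalIntegral.integral_const, smul_eq_mul,
      sub_zero] at havg
    exact mul_left_cancel₀ two_pi_pos.ne' havg
  exact fun θ => (hconst θ).trans h0
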